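/- arXiv:math/0502084 — 2 statements merged into one kernel-verified Lean document; each statement's English description precedes it below -/
import Mathlib

section
/- Let F3 = k⟨x,y,z⟩, τ13 the derivation with τ13(x) = [x,z], τ13(y) = 0, τ13(z) = [z,x], and I3 the span of all words of the form w x w' y w'', w x w' z w'', or w y w' z w''. If w is a word in x, y, z with positive degree in y, then x·w + τ13(w) ∈ I3. -/
open FreeAlgebra

/-- The word associated to a list of letters, in the free algebra. -/
noncomputable def wordOf (k : Type*) [Field k] {n : ℕ} (l : List (Fin n)) : FreeAlgebra k (Fin n) :=
  (l.map (FreeAlgebra.ι k)).prod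

section Aux

variable (k : Type*) [Field k]

lemma wordOf_nil : wordOf k ([] : List (Fin 3)) = 1 := rfl

lemma wordOf_cons (a : Fin 3) (u : List (Fin 3)) :
    wordOf k (a :: u) = ι k a * wordOf k u := by
  simp [wordOf]

lemma wordOf_append (u v : List (Fin 3)) :
    wordOf k (u ++ v) = wordOf k u * wordOf k v := by
  simp [wordOf]

/-- The generating set of I3. -/
def genSet : Set (FreeAlgebra k (Fin 3)) :=
  {a | ∃ u u' u'' : List (Fin 3), ∃ i j : Fin 3, i < j ∧
    a = wordOf k u * ι k i * wordOf k u' * ι k j * wordOf k u''}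

lemma mem_I3 {u u' u'' : List (Fin 3)} {i j : Fin 3} (hij : i < j) :
    wordOf k u * ι k i * wordOf k u' * ι k j * wordOf k u''
      ∈ Submodule.span k (genSet k) :=
  Submodule.subset_span ⟨u, u', u'', i, j, hij, rfl⟩

lemma mul_left_mem (a : Fin 3) {x : FreeAlgebra k (Fin 3)}
    (hx : x ∈ Submodule.span k (genSet k)) :
    ι k a * x ∈ Submodule.span k (genSet k) := by
  induction hx using Submodule.span_induction with
  | mem y hy =>
    obtain ⟨u, u', u'', i, j, hij, rfl⟩ := hy
    have e : ι k a * (wordOf k u * ι k i * wordOf k u' * ι k j * wordOf k u'') =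
        wordOf k (a :: u) * ι k i * wordOf k u' * ι k j * wordOf k u'' := by
      simp [wordOf_cons, mul_assoc]
    rw [e]; exact mem_I3 k hij
  | zero => simp
  | add y z _ _ hy hz => rw [mul_add]; exact Submodule.add_mem _ hy hz
  | smul c y _ hy => rw [mul_smul_comm]; exact Submodule.smul_mem _ _ hy

variable (D : FreeAlgebra k (Fin 3) →ₗ[k] FreeAlgebra k (Fin 3))
  (hLeib : ∀ a b : FreeAlgebra k (Fin 3), D (a * b) = D a * b + a * D b)
  (hx : D (ι k (0 : Fin 3)) = ι k (0 : Fin 3) * ι k 2 - ι k 2 * ι k 0)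
  (hy : D (ι k (1 : Fin 3)) = 0)
  (hz : D (ι k (2 : Fin 3)) = ι k (2 : Fin 3) * ι k 0 - ι k 0 * ι k 2)

include hLeib hx hy hz

lemma D_one : D 1 = 0 := by
  have h := hLeib 1 1
  rw [one_mul, mul_one, one_mul] at h
  exact (left_eq_add.mp h)

lemma keyB : ∀ (w p : List (Fin 3)), (1 : Fin 3) ∈ p →
    wordOf k p * D (wordOf k w) ∈ Submodule.span k (genSet k) := by
  intro w
  induction w with
  | nil =>
    intro p hp
    rw [wordOf_nil, D_one k D hLeib hx hy hz, mul_zero]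
    exact Submodule.zero_mem _
  | cons a w ih =>
    intro p hp
    have e : wordOf k p * D (wordOf k (a :: w)) =
        wordOf k p * D (ι k a) * wordOf k w + wordOf k (p ++ [a]) * D (wordOf k w) := by
      rw [wordOf_cons, hLeib, wordOf_append, wordOf_cons, wordOf_nil, mul_one,
        mul_add, mul_assoc, mul_assoc]
    rw [e]
    refine Submodule.add_mem _ ?_ (ih (p ++ [a]) (by simp [hp]))
    obtain ⟨u, v, rfl⟩ := List.append_of_mem hp
    have hp2 : wordOf k (u ++ 1 :: v) = wordOf k u * ι k 1 * wordOf k v := by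
      rw [wordOf_append, wordOf_cons, mul_assoc]
    fin_cases a
    · rw [show ((⟨0, by norm_num⟩ : Fin 3)) = (0 : Fin 3) from rfl, hx]
      have e2 : wordOf k (u ++ 1 :: v) * (ι k 0 * ι k 2 - ι k 2 * ι k 0) * wordOf k w =
          wordOf k (u ++ 1 :: v) * ι k 0 * wordOf k [] * ι k 2 * wordOf k w
          - wordOf k u * ι k 1 * wordOf k v * ι k 2 * wordOf k (0 :: w) := by
        rw [hp2, wordOf_nil, wordOf_cons]
        noncomm_ring
      rw [e2]
      exact Submodule.sub_mem _ (mem_I3 k (by decide)) (mem_I3 k (by decide))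
    · rw [show ((⟨1, by norm_num⟩ : Fin 3)) = (1 : Fin 3) from rfl, hy]
      simp
    · rw [show ((⟨2, by norm_num⟩ : Fin 3)) = (2 : Fin 3) from rfl, hz]
      have e2 : wordOf k (u ++ 1 :: v) * (ι k 2 * ι k 0 - ι k 0 * ι k 2) * wordOf k w =
          wordOf k u * ι k 1 * wordOf k v * ι k 2 * wordOf k (0 :: w)
          - wordOf k (u ++ 1 :: v) * ι k 0 * wordOf k [] * ι k 2 * wordOf k w := by
        rw [hp2, wordOf_nil, wordOf_cons]
        noncomm_ring
      rw [e2]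
      exact Submodule.sub_mem _ (mem_I3 k (by decide)) (mem_I3 k (by decide))

lemma keyA : ∀ w : List (Fin 3), (1 : Fin 3) ∈ w →
    D (wordOf k w) ∈ Submodule.span k (genSet k) := by
  intro w
  induction w with
  | nil => intro h; simp at h
  | cons a w ih =>
    intro hw
    have e : D (wordOf k (a :: w)) = D (ι k a) * wordOf k w + ι k a * D (wordOf k w) := by
      rw [wordOf_cons, hLeib]
    rw [e]
    by_cases ha : a = 1
    · subst ha
      rw [hy, zero_mul, zero_add]
      have := keyB k D hLeib hx hy hz w [1] (by simp)
      rwa [wordOf_cons, wordOf_nil, mul_one] at this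
    · have hw' : (1 : Fin 3) ∈ w := by
        rcases List.mem_cons.mp hw with h | h
        · exact absurd h.symm ha
        · exact h
      refine Submodule.add_mem _ ?_ (mul_left_mem k a (ih hw'))
      obtain ⟨u, v, rfl⟩ := List.append_of_mem hw'
      have hp2 : wordOf k (u ++ 1 :: v) = wordOf k u * ι k 1 * wordOf k v := by
        rw [wordOf_append, wordOf_cons, mul_assoc]
      fin_cases a
      · rw [show ((⟨0, by norm_num⟩ : Fin 3)) = (0 : Fin 3) from rfl, hx]
        have e2 : (ι k 0 * ι k 2 - ι k 2 * ι k 0) * wordOf k (u ++ 1 :: v) =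
            wordOf k [] * ι k 0 * wordOf k [] * ι k 2 * wordOf k (u ++ 1 :: v)
            - wordOf k [2] * ι k 0 * wordOf k u * ι k 1 * wordOf k v := by
          rw [hp2, wordOf_nil, wordOf_cons, wordOf_nil]
          noncomm_ring
        rw [e2]
        exact Submodule.sub_mem _ (mem_I3 k (by decide)) (mem_I3 k (by decide))
      · exact absurd rfl ha
      · rw [show ((⟨2, by norm_num⟩ : Fin 3)) = (2 : Fin 3) from rfl, hz]
        have e2 : (ι k 2 * ι k 0 - ι k 0 * ι k 2) * wordOf k (u ++ 1 :: v) =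
            wordOf k [2] * ι k 0 * wordOf k u * ι k 1 * wordOf k v
            - wordOf k [] * ι k 0 * wordOf k [] * ι k 2 * wordOf k (u ++ 1 :: v) := by
          rw [hp2, wordOf_nil, wordOf_cons, wordOf_nil]
          noncomm_ring
        rw [e2]
        exact Submodule.sub_mem _ (mem_I3 k (by decide)) (mem_I3 k (by decide))

end Aux

theorem stmt6 (k : Type*) [Field k] [CharZero k]
    (D : FreeAlgebra k (Fin 3) →ₗ[k] FreeAlgebra k (Fin 3))
    (hLeib : ∀ a b : FreeAlgebra k (Fin 3), D (a * b) = D a * b + a * D b)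
    (hx : D (ι k (0 : Fin 3)) = ι k (0 : Fin 3) * ι k 2 - ι k 2 * ι k 0)
    (hy : D (ι k (1 : Fin 3)) = 0)
    (hz : D (ι k (2 : Fin 3)) = ι k (2 : Fin 3) * ι k 0 - ι k 0 * ι k 2)
    (w : List (Fin 3)) (hw : (1 : Fin 3) ∈ w) :
    let I3 : Submodule k (FreeAlgebra k (Fin 3)) :=
      Submodule.span k {a | ∃ u u' u'' : List (Fin 3), ∃ i j : Fin 3, i < j ∧
        a = wordOf k u * ι k i * wordOf k u' * ι k j * wordOf k u''}
    ι k (0 : Fin 3) * wordOf k w + D (wordOf k w) ∈ I3 := by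
  intro I3
  show ι k (0 : Fin 3) * wordOf k w + D (wordOf k w) ∈ Submodule.span k (genSet k)
  refine Submodule.add_mem _ ?_ (keyA k D hLeib hx hy hz w hw)
  obtain ⟨u, v, rfl⟩ := List.append_of_mem hw
  have e : ι k (0 : Fin 3) * wordOf k (u ++ 1 :: v) =
      wordOf k [] * ι k 0 * wordOf k u * ι k 1 * wordOf k v := by
    rw [wordOf_append, wordOf_cons, wordOf_nil]
    noncomm_ring
  rw [e]
  exact mem_I3 k (by decide)
end

section
/- Let k be a field of characteristic 0 and define d̄ : k[X,Y] → k[x,y,z] by d̄(f) = −f(y,z) + (x f(x,z) − y f(y,z))/(x−y) − (y f(x,y) − z f(x,z))/(y−z) + x y f(x−z, y−z)/((x−z)(y−z)) for f in the ideal (XY) of k[X,Y]. Then the kernel of d̄ restricted to (XY) is the linear span of the polynomials X((X^n − Y^n − (X−Y)^n)/(X−Y)) for n ≥ 2. -/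
/-!
Write `f = X Y h`. Differentiating `d̄ f` in `z` at `z = 0` shows that every `h` in the kernel
satisfies the first-order equation `x h(x,0) - y h(y,0) = (x - y) (h + y (∂ₓ + ∂_y) h)`. In
characteristic `0` the operator `1 + y (∂ₓ + ∂_y)` is injective: after the shear `x ↦ x + y` it
becomes `w ↦ ∂_y (y w)`, which multiplies the monomial `xᵃ yᵇ` by `b + 1`. Hence a kernel element
is determined by its restriction `h(x,0)`.

Conversely `d̄` kills every `h` with `(a - b) b h(a,b) = g(a) - g(b) - g(a - b)`, because the twelve
resulting values of `g` cancel in pairs. For `g = t^(m+2)` this gives the generators `h_m`, whose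
restrictions `(m + 2) x^m` span `k[x]`. So every kernel element has the same restriction as a
combination of generators, and therefore equals it.
-/

open MvPolynomial

theorem Submodule.le_span_of_injOn_of_map_le {R M N : Type*} [Ring R] [AddCommGroup M]
    [Module R M] [AddCommGroup N] [Module R N] {S : Submodule R M} {G : Set M} (L : M →ₗ[R] N)
    (hG : G ⊆ S) (hL : ∀ x ∈ S, L x = 0 → x = 0) (hS : S.map L ≤ span R (L '' G)) :
    S ≤ span R G := by
  intro x hx
  obtain ⟨y, hy, hLy⟩ : ∃ y ∈ span R G, L y = L x := by
    rw [← Submodule.mem_map, ← Submodule.span_image]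
    exact hS ⟨x, hx, rfl⟩
  have hxy := hL (x - y) (S.sub_mem hx (span_le.mpr hG hy)) (by rw [map_sub, hLy, sub_self])
  rwa [sub_eq_zero.mp hxy]

namespace MvPolynomial

section CommSemiring

variable {R : Type*} [CommSemiring R]

theorem pderiv_aeval {σ τ : Type*} [Fintype σ] [DecidableEq σ] [DecidableEq τ] (i : τ)
    (g : σ → MvPolynomial τ R) (p : MvPolynomial σ R) :
    pderiv i (aeval g p) = ∑ j, aeval g (pderiv j p) * pderiv i (g j) := by
  induction p using MvPolynomial.induction_on with
  | C a => simp
  | add p q hp hq => simp only [map_add, hp, hq, add_mul, Finset.sum_add_distrib]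
  | mul_X p j hp =>
    simp only [map_mul, map_add, aeval_X, pderiv_mul, pderiv_X, hp, add_mul,
      Finset.sum_add_distrib, Pi.single_apply, mul_ite, mul_one, mul_zero, apply_ite (aeval g),
      map_zero, ite_mul, zero_mul, Finset.sum_ite_eq, Finset.mem_univ, if_true, Finset.sum_mul]
    congr 1
    exact Finset.sum_congr rfl fun _ _ => by ring

theorem coeff_X_mul_pderiv {σ : Type*} (i : σ) (m : σ →₀ ℕ) (p : MvPolynomial σ R) :
    coeff m (X i * pderiv i p) = m i * coeff m p := by
  classical
  induction p using MvPolynomial.induction_on' with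
  | monomial n a =>
    rw [X_mul_pderiv_monomial, coeff_smul, coeff_monomial]
    split_ifs with h <;> simp [h, nsmul_eq_mul]
  | add p q hp hq => simp only [map_add, mul_add, coeff_add, hp, hq]

theorem eq_zero_of_add_X_mul_pderiv_eq_zero [NoZeroDivisors R] [CharZero R] {σ : Type*} {i : σ}
    {p : MvPolynomial σ R} (hp : p + X i * pderiv i p = 0) : p = 0 := by
  ext m
  have hm := congrArg (coeff m) hp
  rw [coeff_add, coeff_X_mul_pderiv, coeff_zero, ← one_add_mul, add_comm] at hm
  exact (mul_eq_zero.mp hm).resolve_left (Nat.cast_add_one_ne_zero _)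

theorem algHom_aeval_pair {S T : Type*} [CommSemiring S] [Algebra R S] [CommSemiring T]
    [Algebra R T] (φ : S →ₐ[R] T) (a b : S) (p : MvPolynomial (Fin 2) R) :
    φ (aeval ![a, b] p) = aeval ![φ a, φ b] p := by
  rw [comp_aeval_apply]
  congr 1
  ext i; fin_cases i <;> simp

theorem aeval_pair_X_X (p : MvPolynomial (Fin 2) R) : aeval ![X 0, X 1] p = p := by
  rw [show (![X 0, X 1] : Fin 2 → MvPolynomial (Fin 2) R) = X by ext i; fin_cases i <;> rfl,
    aeval_X_left_apply]

end CommSemiring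

theorem eq_zero_of_add_X_mul_pderiv_add_pderiv_eq_zero {R : Type*} [CommRing R]
    [NoZeroDivisors R] [CharZero R] {p : MvPolynomial (Fin 2) R}
    (hp : p + X 1 * (pderiv 0 p + pderiv 1 p) = 0) : p = 0 := by
  set shear : MvPolynomial (Fin 2) R →ₐ[R] MvPolynomial (Fin 2) R := aeval ![X 0 + X 1, X 1]
  have hshear : pderiv 1 (shear p) = shear (pderiv 0 p + pderiv 1 p) := by
    rw [pderiv_aeval, Fin.sum_univ_two, map_add]
    simp only [Matrix.cons_val_zero, Matrix.cons_val_one, map_add, pderiv_X_self,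
      pderiv_X_of_ne (show (0 : Fin 2) ≠ 1 by decide), zero_add, mul_one]
    rfl
  have hw : shear p = 0 := by
    apply eq_zero_of_add_X_mul_pderiv_eq_zero (i := 1)
    have := congrArg shear hp
    rwa [map_add, map_mul, map_zero, ← hshear, show shear (X 1) = X 1 from aeval_X _ _] at this
  calc p = aeval ![X 0 - X 1, X 1] (shear p) := by
          rw [algHom_aeval_pair]
          simp only [map_add, aeval_X, Matrix.cons_val_zero, Matrix.cons_val_one,
            sub_add_cancel, aeval_pair_X_X]
    _ = 0 := by rw [hw, map_zero]

end MvPolynomial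

section Dbar

variable {k : Type*} [CommRing k]

/-- `(x - y) (y - z) d̄(X Y h)`, see `dbar_eq`. -/
noncomputable def dbar : MvPolynomial (Fin 2) k →ₗ[k] MvPolynomial (Fin 3) k where
  toFun h :=
    (X 1 - X 2) * (X 0 ^ 2 * X 2 * aeval ![X 0, X 2] h - X 1 ^ 2 * X 2 * aeval ![X 1, X 2] h)
      - (X 0 - X 1) * (X 0 * X 1 ^ 2 * aeval ![X 0, X 1] h - X 0 * X 2 ^ 2 * aeval ![X 0, X 2] h)
      + (X 0 - X 1) * (X 1 - X 2) *
        (X 0 * X 1 * aeval ![X 0 - X 2, X 1 - X 2] h - X 1 * X 2 * aeval ![X 1, X 2] h)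
  map_add' _ _ := by simp only [map_add]; ring
  map_smul' _ _ := by
    simp only [smul_eq_C_mul, map_mul, aeval_C, algebraMap_eq, RingHom.id_apply]; ring

noncomputable def dbarDerivZ : MvPolynomial (Fin 2) k →ₗ[k] MvPolynomial (Fin 2) k where
  toFun h := X 0 * aeval ![X 0, 0] h - X 1 * aeval ![X 1, 0] h
      - (X 0 - X 1) * (h + X 1 * (pderiv 0 h + pderiv 1 h))
  map_add' _ _ := by simp only [map_add]; ring
  map_smul' _ _ := by
    simp only [smul_eq_C_mul, map_mul, aeval_C, algebraMap_eq, RingHom.id_apply, pderiv_C_mul]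
    ring

noncomputable def evalYZero : MvPolynomial (Fin 2) k →ₐ[k] Polynomial k :=
  aeval ![Polynomial.X, 0]

/-- `(X^(m+2) - Y^(m+2) - (X - Y)^(m+2)) / ((X - Y) Y)`, written out with geometric sums. -/
noncomputable def dbarGen (m : ℕ) : MvPolynomial (Fin 2) k :=
  ∑ i ∈ Finset.range (m + 1), X 0 ^ i * X 1 ^ (m - i) +
    ∑ i ∈ Finset.range (m + 1), (X 0 - X 1) ^ i * X 0 ^ (m - i)

theorem dbar_eq (h : MvPolynomial (Fin 2) k) :
    (X 1 - X 2) * (X 0 * aeval ![X 0, X 2] (X 0 * X 1 * h)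
        - X 1 * aeval ![X 1, X 2] (X 0 * X 1 * h))
      - (X 0 - X 1) * (X 1 * aeval ![X 0, X 1] (X 0 * X 1 * h)
        - X 2 * aeval ![X 0, X 2] (X 0 * X 1 * h))
      + (X 0 - X 1) * (X 1 - X 2) *
        (X 0 * X 1 * aeval ![X 0 - X 2, X 1 - X 2] h - aeval ![X 1, X 2] (X 0 * X 1 * h))
      = dbar h := by
  simp only [dbar, LinearMap.coe_mk, AddHom.coe_mk, map_mul, aeval_X, Matrix.cons_val_zero,
    Matrix.cons_val_one]
  ring

theorem aeval_pderiv_two_dbar (h : MvPolynomial (Fin 2) k) :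
    aeval ![X 0, X 1, 0] (pderiv 2 (dbar h)) = X 0 * X 1 * dbarDerivZ h := by
  simp only [dbar, dbarDerivZ, LinearMap.coe_mk, AddHom.coe_mk, map_sub, map_add, map_mul,
    map_pow, pderiv_mul, pderiv_pow, pderiv_aeval, Fin.sum_univ_two, Matrix.cons_val_zero,
    Matrix.cons_val_one, Matrix.head_cons, pderiv_X_self,
    pderiv_X_of_ne (show (0 : Fin 3) ≠ 2 by decide),
    pderiv_X_of_ne (show (1 : Fin 3) ≠ 2 by decide), algHom_aeval_pair, aeval_X,
    Matrix.cons_val_two, Matrix.tail_cons, sub_zero, aeval_pair_X_X, map_zero, map_one,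
    map_natCast]
  ring

theorem ker_dbar_le_ker_dbarDerivZ [IsDomain k] :
    LinearMap.ker (dbar (k := k)) ≤ LinearMap.ker dbarDerivZ := fun h hh => by
  have := aeval_pderiv_two_dbar h
  rw [LinearMap.mem_ker.mp hh, map_zero, map_zero, eq_comm] at this
  exact (mul_eq_zero.mp this).resolve_left (mul_ne_zero (X_ne_zero 0) (X_ne_zero 1))

theorem aeval_X_zero_eq_aeval_evalYZero (i : Fin 2) (h : MvPolynomial (Fin 2) k) :
    aeval ![(X i : MvPolynomial (Fin 2) k), 0] h = Polynomial.aeval (X i) (evalYZero h) := by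
  rw [evalYZero, algHom_aeval_pair]
  simp

theorem eq_zero_of_dbarDerivZ_eq_zero [IsDomain k] [CharZero k] {h : MvPolynomial (Fin 2) k}
    (hstar : dbarDerivZ h = 0) (hslice : evalYZero h = 0) : h = 0 := by
  simp only [dbarDerivZ, LinearMap.coe_mk, AddHom.coe_mk, aeval_X_zero_eq_aeval_evalYZero,
    hslice, map_zero, mul_zero, sub_zero, zero_sub, neg_eq_zero] at hstar
  exact eq_zero_of_add_X_mul_pderiv_add_pderiv_eq_zero
    ((mul_eq_zero.mp hstar).resolve_left
      (sub_ne_zero.mpr (X_injective.ne (by decide : (0 : Fin 2) ≠ 1))))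

theorem X_sub_X_mul_X_mul_dbarGen (m : ℕ) :
    (X 0 - X 1) * X 1 * dbarGen (k := k) m =
      X 0 ^ (m + 2) - X 1 ^ (m + 2) - (X 0 - X 1) ^ (m + 2) := by
  have h₁ := geom_sum₂_mul (X 0 : MvPolynomial (Fin 2) k) (X 1) (m + 1)
  have h₂ := geom_sum₂_mul ((X 0 : MvPolynomial (Fin 2) k) - X 1) (X 0) (m + 1)
  simp only [Nat.add_sub_cancel] at h₁ h₂
  rw [dbarGen]
  linear_combination (X 1 : MvPolynomial (Fin 2) k) * h₁ - (X 0 - X 1) * h₂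

theorem dbar_eq_zero_of_X_sub_X_mul_X_mul_eq (g : Polynomial k) {h : MvPolynomial (Fin 2) k}
    (hh : (X 0 - X 1) * X 1 * h =
      Polynomial.aeval (X 0) g - Polynomial.aeval (X 1) g - Polynomial.aeval (X 0 - X 1) g) :
    dbar h = 0 := by
  have R₁ := congrArg (aeval ![(X 0 : MvPolynomial (Fin 3) k), X 2]) hh
  have R₂ := congrArg (aeval ![(X 1 : MvPolynomial (Fin 3) k), X 2]) hh
  have R₃ := congrArg (aeval ![(X 0 : MvPolynomial (Fin 3) k), X 1]) hh
  have R₄ := congrArg (aeval ![(X 0 - X 2 : MvPolynomial (Fin 3) k), X 1 - X 2]) hh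
  simp only [map_mul, map_sub, ← Polynomial.aeval_algHom_apply, aeval_X, Matrix.cons_val_zero,
    Matrix.cons_val_one, sub_sub_sub_cancel_right] at R₁ R₂ R₃ R₄
  simp only [dbar, LinearMap.coe_mk, AddHom.coe_mk]
  linear_combination (X 0 * X 1 : MvPolynomial (Fin 3) k) * (R₁ - R₂ - R₃ + R₄)

theorem evalYZero_dbarGen (m : ℕ) :
    evalYZero (dbarGen (k := k) m) = ((m + 2 : ℕ) : Polynomial k) * Polynomial.X ^ m := by
  have h₁ : ∑ i ∈ Finset.range (m + 1), (Polynomial.X : Polynomial k) ^ i * 0 ^ (m - i) =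
      Polynomial.X ^ m := by
    rw [Finset.sum_eq_single_of_mem m (by simp) fun i hi hne => by
      rw [zero_pow (by simp at hi; omega), mul_zero]]
    simp
  have h₂ : ∑ i ∈ Finset.range (m + 1), ((Polynomial.X : Polynomial k) - 0) ^ i *
      Polynomial.X ^ (m - i) = (m + 1) * Polynomial.X ^ m := by
    rw [Finset.sum_congr rfl fun i hi => by
      rw [sub_zero, ← pow_add, Nat.add_sub_cancel' (by simp at hi; omega)]]
    simp
  simp only [dbarGen, evalYZero, map_add, map_sum, map_mul, map_pow, map_sub, aeval_X,
    Matrix.cons_val_zero, Matrix.cons_val_one, h₁, h₂]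
  push_cast
  ring

theorem setOf_X_mul_eq_image_dbarGen [IsDomain k] :
    {p : MvPolynomial (Fin 2) k | ∃ n : ℕ, 2 ≤ n ∧ ∃ q : MvPolynomial (Fin 2) k,
      (X 0 - X 1) * q = X 0 ^ n - X 1 ^ n - (X 0 - X 1) ^ n ∧ p = X 0 * q} =
      LinearMap.mulLeft k (X 0 * X 1) '' Set.range dbarGen := by
  ext p
  constructor
  · rintro ⟨n, hn, q, hq, rfl⟩
    obtain ⟨m, rfl⟩ := Nat.exists_eq_add_of_le' hn
    have hq' : q = X 1 * dbarGen m := mul_left_cancel₀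
      (sub_ne_zero.mpr (X_injective.ne (by decide : (0 : Fin 2) ≠ 1)))
      (by rw [hq, ← X_sub_X_mul_X_mul_dbarGen, mul_assoc])
    exact ⟨dbarGen m, ⟨m, rfl⟩, by rw [hq', ← mul_assoc]; rfl⟩
  · rintro ⟨_, ⟨m, rfl⟩, rfl⟩
    exact ⟨m + 2, by omega, X 1 * dbarGen m, by rw [← mul_assoc, X_sub_X_mul_X_mul_dbarGen],
      mul_assoc _ _ _⟩

end Dbar

theorem ker_dbar_eq_span {k : Type*} [Field k] [CharZero k] :
    LinearMap.ker (dbar (k := k)) = Submodule.span k (Set.range dbarGen) := by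
  have hgen :
      Set.range dbarGen ⊆ (LinearMap.ker (dbar (k := k)) : Set (MvPolynomial (Fin 2) k)) := by
    rintro _ ⟨m, rfl⟩
    exact dbar_eq_zero_of_X_sub_X_mul_X_mul_eq (Polynomial.X ^ (m + 2))
      (by simpa using X_sub_X_mul_X_mul_dbarGen m)
  refine le_antisymm (ker_dbar_le_ker_dbarDerivZ.trans ?_) (Submodule.span_le.mpr hgen)
  refine Submodule.le_span_of_injOn_of_map_le evalYZero.toLinearMap
    (hgen.trans ker_dbar_le_ker_dbarDerivZ) (fun h hh h0 => eq_zero_of_dbarDerivZ_eq_zero hh h0) ?_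
  refine le_top.trans ?_
  rw [← (Polynomial.basisMonomials k).span_eq, Polynomial.coe_basisMonomials, Submodule.span_le]
  rintro _ ⟨m, rfl⟩
  have hm : ((m + 2 : ℕ) : k) ≠ 0 := Nat.cast_ne_zero.mpr (by omega)
  have hmonomial :
      Polynomial.monomial m (1 : k) = ((m + 2 : ℕ) : k)⁻¹ • evalYZero (dbarGen m) := by
    rw [evalYZero_dbarGen, Polynomial.smul_eq_C_mul, ← mul_assoc, ← Polynomial.C_eq_natCast,
      ← Polynomial.C_mul, inv_mul_cancel₀ hm, Polynomial.C_1, one_mul,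
      Polynomial.monomial_one_right_eq_X_pow]
  beta_reduce
  rw [SetLike.mem_coe, hmonomial]
  exact Submodule.smul_mem _ _ (Submodule.subset_span ⟨_, ⟨m, rfl⟩, rfl⟩)

theorem stmt10 (k : Type*) [Field k] [CharZero k] :
    {f : MvPolynomial (Fin 2) k | ∃ h : MvPolynomial (Fin 2) k,
      f = X 0 * X 1 * h ∧
      (let x : MvPolynomial (Fin 3) k := X 0
       let y : MvPolynomial (Fin 3) k := X 1
       let z : MvPolynomial (Fin 3) k := X 2
       let F : MvPolynomial (Fin 3) k → MvPolynomial (Fin 3) k → MvPolynomial (Fin 3) k :=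
         fun a b => aeval ![a, b] f
       let H : MvPolynomial (Fin 3) k → MvPolynomial (Fin 3) k → MvPolynomial (Fin 3) k :=
         fun a b => aeval ![a, b] h
       (y - z) * (x * F x z - y * F y z) - (x - y) * (y * F x y - z * F x z)
         + (x - y) * (y - z) * (x * y * H (x - z) (y - z) - F y z) = 0)}
    = ↑(Submodule.span k {p : MvPolynomial (Fin 2) k | ∃ n : ℕ, 2 ≤ n ∧
        ∃ q : MvPolynomial (Fin 2) k,
          (X 0 - X 1) * q = X 0 ^ n - X 1 ^ n - (X 0 - X 1) ^ n ∧ p = X 0 * q}) := by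
  rw [setOf_X_mul_eq_image_dbarGen, Submodule.span_image, ← ker_dbar_eq_span, Submodule.map_coe]
  ext f
  constructor
  · rintro ⟨h, rfl, hE⟩
    exact ⟨h, LinearMap.mem_ker.mpr ((dbar_eq h).symm.trans hE), rfl⟩
  · rintro ⟨h, hh, rfl⟩
    exact ⟨h, rfl, (dbar_eq h).trans (LinearMap.mem_ker.mp hh)⟩
end
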